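/- Under the hypotheses of the reversal-invariance theorem (tokenization stability of τ and τ_T under reversal on D via a bijection π : V ≃ V_T), the map Ψ sending a probability function P : List V → ℝ≥0 to Q : List V_T → ℝ≥0 defined by Q(w) = P(List.reverse (List.map π.symm w)) is a bijection between probability functions on List V and probability functions on List V_T, it preserves corpus NLL in the sense that L(P; τ, D) = L(Ψ(P); τ_T, T(D)), and consequently (i) the infimum over all probability functions of L(·; τ, D) equals the infimum over all probability functions of L(·; τ_T, T(D)), and (ii) Ψ restricts to a bijection between the set of minimizers of L(·; τ, D) and the set of minimizers of L(·; τ_T, T(D)). -/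

import Mathlib

/-!
Reversing a token sequence and relabelling its tokens through `π` is a bijection
`List V ≃ List V_T`, and `Ψ` is precomposition with its inverse, hence a bijection of
probability functions. Stability says the tokenization of a reversed string is the image of
the original tokenization under this bijection, so every summand of the corpus NLL is
unchanged. A bijective reparameterization preserving the loss has the same range of loss
values and carries minimizers to minimizers.
-/

open scoped NNReal

/-- Corpus negative log-likelihood: `L(P; τ, D) = (1/|D|) ∑_{s ∈ D} (- log P(τ s))`. -/
noncomputable def corpusNLL {S V : Type*} (τ : List S → List V)
    (D : Multiset (List S)) (P : List V → ℝ≥0) : ℝ :=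
  (1 / (D.card : ℝ)) * (D.map (fun s => - Real.log (P (τ s)))).sum

theorem corpusNLL_map_eq_comp {S V W : Type*} {D : Multiset (List S)}
    {τ : List S → List V} {τ' : List S → List W} {f : List S → List S}
    {g : List V → List W} (hτ : ∀ s ∈ D, τ' (f s) = g (τ s)) (Q : List W → ℝ≥0) :
    corpusNLL τ' (D.map f) Q = corpusNLL τ D (Q ∘ g) := by
  unfold corpusNLL
  rw [Multiset.card_map, Multiset.map_map]
  congr 2
  exact Multiset.map_congr rfl fun s hs => by simp only [Function.comp_apply, hτ s hs]

def List.reverseMapEquiv {V W : Type*} (π : V ≃ W) : List V ≃ List W where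
  toFun v := v.reverse.map π
  invFun w := (w.map π.symm).reverse
  left_inv v := by simp [List.map_reverse]
  right_inv w := by simp

section Reparameterization

variable {α β : Type*} {Ψ : α → β} {L : α → ℝ} {L' : β → ℝ}

theorem Function.Surjective.range_eq_of_comp_eq (hΨ : Function.Surjective Ψ)
    (hL : ∀ a, L a = L' (Ψ a)) : Set.range L = Set.range L' := by
  rw [show L = L' ∘ Ψ from funext hL, hΨ.range_comp]

theorem Function.Bijective.bijOn_minimizers_of_comp_eq (hΨ : Function.Bijective Ψ)
    (hL : ∀ a, L a = L' (Ψ a)) :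
    Set.BijOn Ψ {a | ∀ a', L a ≤ L a'} {b | ∀ b', L' b ≤ L' b'} := by
  have hpre : {a | ∀ a', L a ≤ L a'} = Ψ ⁻¹' {b | ∀ b', L' b ≤ L' b'} := by
    ext a
    simp only [Set.mem_ofPred_eq, Set.mem_preimage, hΨ.2.forall, hL]
  exact hpre ▸ hΨ.bijOn_preimage

end Reparameterization

theorem loss_landscapes_and_minima_general
    {S : Type*} {V V_T : Type*}
    (D : Multiset (List S))
    (τ : List S → List V) (τT : List S → List V_T)
    (π : V ≃ V_T)
    (hstable : ∀ s ∈ D, τT s.reverse = ((τ s).reverse).map π)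
    (Ψ : (List V → ℝ≥0) → (List V_T → ℝ≥0))
    (hΨ : ∀ (P : List V → ℝ≥0) (w : List V_T), Ψ P w = P ((w.map π.symm).reverse)) :
    Function.Bijective Ψ ∧
    (∀ P : List V → ℝ≥0,
      corpusNLL τ D P = corpusNLL τT (D.map List.reverse) (Ψ P)) ∧
    sInf (Set.range (fun P : List V → ℝ≥0 => corpusNLL τ D P))
      = sInf (Set.range (fun Q : List V_T → ℝ≥0 => corpusNLL τT (D.map List.reverse) Q)) ∧
    Set.BijOn Ψ
      {P : List V → ℝ≥0 | ∀ P' : List V → ℝ≥0, corpusNLL τ D P ≤ corpusNLL τ D P'}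
      {Q : List V_T → ℝ≥0 | ∀ Q' : List V_T → ℝ≥0,
        corpusNLL τT (D.map List.reverse) Q ≤ corpusNLL τT (D.map List.reverse) Q'} := by
  let e := List.reverseMapEquiv π
  have hΨe : Ψ = e.arrowCongr (Equiv.refl ℝ≥0) := funext fun P => funext (hΨ P)
  have hbij : Function.Bijective Ψ := hΨe ▸ Equiv.bijective _
  have hNLL (P : List V → ℝ≥0) :
      corpusNLL τ D P = corpusNLL τT (D.map List.reverse) (Ψ P) := by
    rw [corpusNLL_map_eq_comp (g := e) hstable, hΨe]
    simp [Function.comp_def]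
  exact ⟨hbij, hNLL, congrArg sInf (hbij.2.range_eq_of_comp_eq hNLL),
    hbij.bijOn_minimizers_of_comp_eq hNLL⟩

/-- **Loss landscapes and minima (Corollary 4.6).**
Under tokenization stability of `τ` and `τT` under reversal on `D` via a bijection
`π : V ≃ V_T`, the reparameterization map `Ψ` sending `P : List V → ℝ≥0` to
`Q : List V_T → ℝ≥0`, `Q w = P ((w.map π.symm).reverse)`, is a bijection between
probability functions on `List V` and probability functions on `List V_T`; it
preserves corpus NLL, `L(P; τ, D) = L(Ψ P; τT, T D)` where `T D = D.map List.reverse`;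
consequently (i) the infima of the two losses over all probability functions agree,
and (ii) `Ψ` restricts to a bijection between the minimizers of `L(·; τ, D)` and the
minimizers of `L(·; τT, T D)`. -/
theorem loss_landscapes_and_minima
    {S : Type*} {V V_T : Type*} [Fintype V] [Fintype V_T]
    (D : Multiset (List S))
    (τ : List S → List V) (τT : List S → List V_T)
    (π : V ≃ V_T)
    (hstable : ∀ s ∈ D, τT s.reverse = ((τ s).reverse).map π)
    (Ψ : (List V → ℝ≥0) → (List V_T → ℝ≥0))
    (hΨ : ∀ (P : List V → ℝ≥0) (w : List V_T), Ψ P w = P ((w.map π.symm).reverse)) :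
    Function.Bijective Ψ ∧
    (∀ P : List V → ℝ≥0,
      corpusNLL τ D P = corpusNLL τT (D.map List.reverse) (Ψ P)) ∧
    sInf (Set.range (fun P : List V → ℝ≥0 => corpusNLL τ D P))
      = sInf (Set.range (fun Q : List V_T → ℝ≥0 => corpusNLL τT (D.map List.reverse) Q)) ∧
    Set.BijOn Ψ
      {P : List V → ℝ≥0 | ∀ P' : List V → ℝ≥0, corpusNLL τ D P ≤ corpusNLL τ D P'}
      {Q : List V_T → ℝ≥0 | ∀ Q' : List V_T → ℝ≥0,
        corpusNLL τT (D.map List.reverse) Q ≤ corpusNLL τT (D.map List.reverse) Q'} :=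
  loss_landscapes_and_minima_general D τ τT π hstable Ψ hΨ
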